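/- arXiv:1812.04594 — 2 statements merged into one kernel-verified Lean document; each statement's English description precedes it below -/
import Mathlib

section
/- Let P be a symmetric N×N stochastic matrix with orthonormal eigendecomposition P = Φ Λ Φ*, where the top eigenvector is 𝟙/√N with eigenvalue 1. Let g be a vector in ℝ^N lying in the span of eigenvectors with |eigenvalue| > λ > 0 and with ⟨g, 𝟙⟩ = 0 (i.e., g orthogonal to constants). Then for any probability weight vector a (a_w ≥ 0, Σ a_w = 1), |Σ_w a_w g(w)| ≤ (1/λ) (‖P a‖₂² − 1/N)^{1/2} ‖g‖₂. -/
/-!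
Put `b = a - 𝟙/N`; as `g` has mean zero, `∑ a_w g(w) = ⟨b, g⟩`. Dividing each spectral
coefficient of `g` by its eigenvalue gives `h` with `P h = g` and `λ ‖h‖ ≤ ‖g‖`, because all
eigenvalues involved exceed `λ` in modulus. By symmetry `⟨b, P h⟩ = ⟨P b, h⟩`, so Cauchy–Schwarz
bounds the sum by `‖P b‖ ‖g‖ / λ`, and `‖P b‖² = ‖P a - 𝟙/N‖² = ‖P a‖² - 1/N` since `P a` has
total mass one.
-/

open Matrix Finset

section

variable {n ι : Type*} [Fintype n]

lemma sum_sq_eq_dotProduct_self (x : n → ℝ) : ∑ i, x i ^ 2 = x ⬝ᵥ x := by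
  simp only [dotProduct, sq]

lemma dotProduct_self_nonneg (x : n → ℝ) : 0 ≤ x ⬝ᵥ x :=
  sum_nonneg fun i _ => mul_self_nonneg (x i)

lemma abs_dotProduct_le_sqrt_mul_sqrt (x y : n → ℝ) :
    |x ⬝ᵥ y| ≤ √(x ⬝ᵥ x) * √(y ⬝ᵥ y) := by
  rw [← Real.sqrt_mul (dotProduct_self_nonneg x)]
  refine Real.abs_le_sqrt ?_
  simpa only [dotProduct, sq] using sum_mul_sq_le_sq_mul_sq univ x y

lemma Matrix.IsSymm.mulVec_dotProduct_comm {P : Matrix n n ℝ} (hP : P.IsSymm) (x y : n → ℝ) :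
    P *ᵥ x ⬝ᵥ y = x ⬝ᵥ P *ᵥ y := by
  rw [dotProduct_mulVec, ← mulVec_transpose, hP.eq, dotProduct_comm]

lemma sum_smul_dotProduct_self_of_orthonormal [DecidableEq ι] {φ : ι → n → ℝ}
    (horth : ∀ i j, φ i ⬝ᵥ φ j = if i = j then 1 else 0) (s : Finset ι) (c : ι → ℝ) :
    (∑ i ∈ s, c i • φ i) ⬝ᵥ (∑ i ∈ s, c i • φ i) = ∑ i ∈ s, c i ^ 2 := by
  simp [sum_dotProduct, dotProduct_sum, horth, sq]

lemma sub_const_dotProduct_self {x : n → ℝ} (hx : ∑ i, x i = 1) :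
    (x - (Fintype.card n : ℝ)⁻¹ • 1) ⬝ᵥ (x - (Fintype.card n : ℝ)⁻¹ • 1)
      = x ⬝ᵥ x - (Fintype.card n : ℝ)⁻¹ := by
  have hcard : (Fintype.card n : ℝ) * (Fintype.card n : ℝ)⁻¹ ^ 2 = (Fintype.card n : ℝ)⁻¹ := by
    rcases eq_or_ne (Fintype.card n : ℝ) 0 with h | h
    · simp [h]
    · field_simp
  simp only [sub_dotProduct, dotProduct_sub, smul_dotProduct, dotProduct_smul, one_dotProduct_one]
  simp only [dotProduct_one, one_dotProduct, hx, smul_eq_mul]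
  linear_combination hcard

lemma exists_mulVec_eq_sum_smul_of_lt_abs [DecidableEq ι] {P : Matrix n n ℝ} {φ : ι → n → ℝ}
    {μ : ι → ℝ} (horth : ∀ i j, φ i ⬝ᵥ φ j = if i = j then 1 else 0)
    (heig : ∀ i, P *ᵥ φ i = μ i • φ i) {lam : ℝ} (hlam : 0 ≤ lam) {s : Finset ι}
    (hs : ∀ i ∈ s, lam < |μ i|) (c : ι → ℝ) :
    ∃ h, P *ᵥ h = ∑ i ∈ s, c i • φ i ∧
      lam * √(h ⬝ᵥ h) ≤ √((∑ i ∈ s, c i • φ i) ⬝ᵥ (∑ i ∈ s, c i • φ i)) := by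
  have hμ : ∀ i ∈ s, μ i ≠ 0 := fun i hi => abs_pos.mp (hlam.trans_lt (hs i hi))
  refine ⟨∑ i ∈ s, (c i / μ i) • φ i, ?_, ?_⟩
  · rw [mulVec_sum]
    refine sum_congr rfl fun i hi => ?_
    rw [mulVec_smul, heig, smul_smul, div_mul_cancel₀ _ (hμ i hi)]
  · rw [sum_smul_dotProduct_self_of_orthonormal horth, sum_smul_dotProduct_self_of_orthonormal horth,
      ← Real.sqrt_sq hlam, ← Real.sqrt_mul (sq_nonneg _), mul_sum]
    refine Real.sqrt_le_sqrt (sum_le_sum fun i hi => ?_)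
    have hlam_sq : lam ^ 2 ≤ μ i ^ 2 := by
      rw [← sq_abs (μ i)]
      exact pow_le_pow_left₀ hlam (hs i hi).le 2
    rw [div_pow, mul_div_assoc', div_le_iff₀ (by positivity [hμ i hi]), mul_comm]
    gcongr

end

open Classical in
theorem stmt2_general (N : ℕ)
    (P : Matrix (Fin N) (Fin N) ℝ) (hPsym : P.IsSymm)
    (φ : Fin N → Fin N → ℝ) (μ : Fin N → ℝ)
    (horth : ∀ i j, (∑ v, φ i v * φ j v) = if i = j then (1 : ℝ) else 0)
    (heig : ∀ i, P.mulVec (φ i) = μ i • φ i)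
    (hPone : P.mulVec (fun _ => (1 : ℝ)) = fun _ => (1 : ℝ))
    (lam : ℝ) (hlam : 0 < lam)
    (g : Fin N → ℝ)
    (hg : ∃ c : Fin N → ℝ,
      g = fun v => ∑ i ∈ Finset.univ.filter (fun i => lam < |μ i|), c i * φ i v)
    (hgmean : (∑ v, g v) = 0)
    (a : Fin N → ℝ) (ha : (∑ w, a w) = 1) :
    |∑ w, a w * g w|
      ≤ (1 / lam) * Real.sqrt ((∑ v, (P.mulVec a v) ^ 2) - 1 / N)
          * Real.sqrt (∑ v, g v ^ 2) := by
  obtain ⟨c, hc⟩ := hg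
  have hg : g = ∑ i ∈ univ.filter (fun i => lam < |μ i|), c i • φ i := by
    rw [hc]; ext v; simp [Finset.sum_apply]
  obtain ⟨h, hPh, hh⟩ := exists_mulVec_eq_sum_smul_of_lt_abs horth heig hlam.le
    (fun i hi => (mem_filter.mp hi).2) c
  rw [← hg] at hPh hh
  have hPone' : P *ᵥ 1 = 1 := hPone
  set b := a - (N : ℝ)⁻¹ • 1
  have hPa : ∑ v, (P *ᵥ a) v = 1 := by
    rw [← one_dotProduct, ← hPsym.mulVec_dotProduct_comm, hPone', one_dotProduct, ha]
  have hPb_sq : P *ᵥ b ⬝ᵥ P *ᵥ b = ∑ v, (P *ᵥ a) v ^ 2 - 1 / N := by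
    have := sub_const_dotProduct_self hPa
    rw [Fintype.card_fin] at this
    rw [mulVec_sub, mulVec_smul, hPone', this, sum_sq_eq_dotProduct_self, one_div]
  have hquad : ∑ w, a w * g w = P *ᵥ b ⬝ᵥ h := calc
    ∑ w, a w * g w = b ⬝ᵥ g := by
      rw [sub_dotProduct, smul_dotProduct, one_dotProduct, hgmean, smul_zero, sub_zero]
      rfl
    _ = P *ᵥ b ⬝ᵥ h := by rw [← hPh, hPsym.mulVec_dotProduct_comm]
  calc |∑ w, a w * g w| ≤ √(P *ᵥ b ⬝ᵥ P *ᵥ b) * √(h ⬝ᵥ h) := by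
        rw [hquad]; exact abs_dotProduct_le_sqrt_mul_sqrt _ _
    _ ≤ √(P *ᵥ b ⬝ᵥ P *ᵥ b) * (1 / lam * √(g ⬝ᵥ g)) := by
        gcongr
        rw [one_div, le_inv_mul_iff₀ hlam]
        exact hh
    _ = _ := by rw [hPb_sq, sum_sq_eq_dotProduct_self g]; ring

open Classical in
/-- Quadrature bound for a high-frequency, mean-zero vector `g`:
`|∑ a_w g(w)| ≤ (1/λ) (‖Pa‖² − 1/N)^{1/2} ‖g‖`. -/
theorem stmt2 (N : ℕ) (hN : 0 < N)
    (P : Matrix (Fin N) (Fin N) ℝ) (hPsym : P.IsSymm)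
    (hPnonneg : ∀ i j, 0 ≤ P i j) (hProws : ∀ i, (∑ j, P i j) = 1)
    (φ : Fin N → Fin N → ℝ) (μ : Fin N → ℝ)
    (horth : ∀ i j, (∑ v, φ i v * φ j v) = if i = j then (1 : ℝ) else 0)
    (heig : ∀ i, P.mulVec (φ i) = μ i • φ i)
    (hPone : P.mulVec (fun _ => (1 : ℝ)) = fun _ => (1 : ℝ))
    (lam : ℝ) (hlam : 0 < lam)
    (g : Fin N → ℝ)
    (hg : ∃ c : Fin N → ℝ,
      g = fun v => ∑ i ∈ Finset.univ.filter (fun i => lam < |μ i|), c i * φ i v)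
    (hgmean : (∑ v, g v) = 0)
    (a : Fin N → ℝ) (hanneg : ∀ w, 0 ≤ a w) (ha : (∑ w, a w) = 1) :
    |∑ w, a w * g w|
      ≤ (1 / lam) * Real.sqrt ((∑ v, (P.mulVec a v) ^ 2) - 1 / N)
          * Real.sqrt (∑ v, g v ^ 2) :=
  stmt2_general N P hPsym φ μ horth heig hPone lam hlam g hg hgmean a ha
end

section
/- Let P be a symmetric N×N stochastic matrix with P𝟙 = 𝟙, let 0 < λ < 1, and let Π = Φ_λΦ_λ* be the projection onto the eigenvectors of P with eigenvalue of absolute value > λ (so the constant vector lies in this span). Then for any h in the range of Π with ‖h‖₂ ≤ ρ and any probability vector a, |(1/N)Σ_v h(v) − Σ_w a_w h(w)| ≤ (ρ/λ)(‖Pa‖₂² − 1/N)^{1/2}. -/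
open Classical in
/-- Quadrature bound for a vector `h` in the retained (high-|eigenvalue|) span:
`|(1/N)∑ h − ∑ a_w h(w)| ≤ (ρ/λ)(‖Pa‖² − 1/N)^{1/2}`. -/
theorem stmt16 (N : ℕ) (hN : 0 < N)
    (P : Matrix (Fin N) (Fin N) ℝ) (hPsym : P.IsSymm)
    (hPnonneg : ∀ i j, 0 ≤ P i j) (hProws : ∀ i, (∑ j, P i j) = 1)
    (φ : Fin N → Fin N → ℝ) (μ : Fin N → ℝ)
    (horth : ∀ i j, (∑ v, φ i v * φ j v) = if i = j then (1 : ℝ) else 0)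
    (heig : ∀ i, P.mulVec (φ i) = μ i • φ i)
    (hPone : P.mulVec (fun _ => (1 : ℝ)) = fun _ => (1 : ℝ))
    (lam : ℝ) (hlam0 : 0 < lam) (hlam1 : lam < 1)
    (h : Fin N → ℝ) (ρ : ℝ)
    (hh : ∃ c : Fin N → ℝ,
      h = fun v => ∑ i ∈ Finset.univ.filter (fun i => lam < |μ i|), c i * φ i v)
    (hρ : Real.sqrt (∑ v, h v ^ 2) ≤ ρ)
    (a : Fin N → ℝ) (hanneg : ∀ w, 0 ≤ a w) (ha : (∑ w, a w) = 1) :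
    |(1 / (N : ℝ)) * ∑ v, h v - ∑ w, a w * h w|
      ≤ (ρ / lam) * Real.sqrt ((∑ v, (P.mulVec a v) ^ 2) - 1 / N) := by
  classical
  obtain ⟨c, hc⟩ := hh
  set S : Finset (Fin N) := Finset.univ.filter (fun i => lam < |μ i|) with hSdef
  have hPsym' : ∀ i j, P i j = P j i := fun i j => (Matrix.IsSymm.apply hPsym j i)
  -- dual orthogonality: columns of φ are orthonormal too
  have hdual : ∀ v w, (∑ i, φ i v * φ i w) = if v = w then (1 : ℝ) else 0 := by
    have h1 : (Matrix.of φ) * (Matrix.of φ).transpose = 1 := by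
      ext i j
      simpa [Matrix.mul_apply, Matrix.one_apply] using horth i j
    have h2 : (Matrix.of φ).transpose * (Matrix.of φ) = 1 := mul_eq_one_comm.mp h1
    intro v w
    have := congrFun (congrFun h2 v) w
    simpa [Matrix.mul_apply, Matrix.transpose_apply, Matrix.one_apply] using this
  set b : Fin N → ℝ := fun v => a v - 1 / N with hbdef
  set g : Fin N → ℝ := P.mulVec b with hgdef
  set β : Fin N → ℝ := fun i => ∑ v, b v * φ i v with hβdef
  set γ : Fin N → ℝ := fun i => ∑ v, g v * φ i v with hγdef
  -- γ i = μ i * β i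
  have hγβ : ∀ i, γ i = μ i * β i := by
    intro i
    have e1 : γ i = ∑ v, ∑ w, P v w * b w * φ i v := by
      rw [hγdef]; simp only [hgdef, Matrix.mulVec, dotProduct]
      exact Finset.sum_congr rfl fun v _ => Finset.sum_mul _ _ _
    have e2 : ∀ w, (∑ v, P w v * φ i v) = μ i * φ i w := by
      intro w
      have := congrFun (heig i) w
      simpa [Matrix.mulVec, dotProduct] using this
    rw [e1, Finset.sum_comm]
    calc (∑ w, ∑ v, P v w * b w * φ i v)
        = ∑ w, b w * (μ i * φ i w) := by
          refine Finset.sum_congr rfl fun w _ => ?_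
          rw [← e2 w, Finset.mul_sum]
          exact Finset.sum_congr rfl fun v _ => by rw [hPsym' v w]; ring
      _ = μ i * β i := by
          rw [hβdef, Finset.mul_sum]
          exact Finset.sum_congr rfl fun w _ => by ring
  -- Parseval for g
  have parseval : (∑ i, γ i ^ 2) = ∑ v, g v ^ 2 := by
    have e1 : ∀ i, γ i ^ 2 = ∑ v, ∑ w, g v * g w * (φ i v * φ i w) := by
      intro i
      rw [hγdef]; simp only
      rw [sq, Finset.sum_mul_sum]
      exact Finset.sum_congr rfl fun v _ => Finset.sum_congr rfl fun w _ => by ring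
    calc (∑ i, γ i ^ 2) = ∑ i, ∑ v, ∑ w, g v * g w * (φ i v * φ i w) :=
          Finset.sum_congr rfl fun i _ => e1 i
      _ = ∑ v, ∑ w, ∑ i, g v * g w * (φ i v * φ i w) := by
          rw [Finset.sum_comm]
          exact Finset.sum_congr rfl fun v _ => Finset.sum_comm
      _ = ∑ v, ∑ w, g v * g w * (if v = w then (1:ℝ) else 0) := by
          refine Finset.sum_congr rfl fun v _ => Finset.sum_congr rfl fun w _ => ?_
          rw [← Finset.mul_sum, hdual]
      _ = ∑ v, g v ^ 2 := by
          refine Finset.sum_congr rfl fun v _ => ?_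
          simp only [mul_ite, mul_one, mul_zero]
          rw [Finset.sum_ite_eq Finset.univ v (fun w => g v * g w)]
          simp [sq]
  -- norm of h
  have hnorm : (∑ v, h v ^ 2) = ∑ i ∈ S, c i ^ 2 := by
    have e1 : ∀ v, h v ^ 2 = ∑ i ∈ S, ∑ j ∈ S, c i * c j * (φ i v * φ j v) := by
      intro v
      rw [hc]; simp only
      rw [sq, Finset.sum_mul_sum]
      exact Finset.sum_congr rfl fun i _ => Finset.sum_congr rfl fun j _ => by ring
    calc (∑ v, h v ^ 2) = ∑ v, ∑ i ∈ S, ∑ j ∈ S, c i * c j * (φ i v * φ j v) :=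
          Finset.sum_congr rfl fun v _ => e1 v
      _ = ∑ i ∈ S, ∑ j ∈ S, ∑ v, c i * c j * (φ i v * φ j v) := by
          rw [Finset.sum_comm]
          exact Finset.sum_congr rfl fun i _ => Finset.sum_comm
      _ = ∑ i ∈ S, ∑ j ∈ S, c i * c j * (if i = j then (1:ℝ) else 0) := by
          refine Finset.sum_congr rfl fun i _ => Finset.sum_congr rfl fun j _ => ?_
          rw [← Finset.mul_sum, horth]
      _ = ∑ i ∈ S, c i ^ 2 := by
          refine Finset.sum_congr rfl fun i hi => ?_
          simp only [mul_ite, mul_one, mul_zero]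
          rw [Finset.sum_ite_eq S i (fun j => c i * c j)]
          simp [hi, sq]
  -- LHS as inner product with b
  have hLHS : (1 / (N : ℝ)) * ∑ v, h v - ∑ w, a w * h w = -(∑ v, b v * h v) := by
    have e : ∀ v : Fin N, b v * h v = a v * h v - 1 / (N : ℝ) * h v := fun v => by
      rw [hbdef]; ring
    rw [Finset.sum_congr rfl fun v _ => e v, Finset.sum_sub_distrib, neg_sub,
      ← Finset.mul_sum]
  -- inner product expansion
  have hinner : (∑ v, b v * h v) = ∑ i ∈ S, c i * β i := by
    calc (∑ v, b v * h v) = ∑ v, ∑ i ∈ S, c i * (b v * φ i v) := by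
          refine Finset.sum_congr rfl fun v _ => ?_
          rw [hc]; simp only
          rw [Finset.mul_sum]
          exact Finset.sum_congr rfl fun i _ => by ring
      _ = ∑ i ∈ S, ∑ v, c i * (b v * φ i v) := Finset.sum_comm
      _ = ∑ i ∈ S, c i * β i := by
          refine Finset.sum_congr rfl fun i _ => ?_
          rw [hβdef]; simp only [Finset.mul_sum]
  -- rewrite terms via γ
  have hμne : ∀ i ∈ S, μ i ≠ 0 := by
    intro i hi
    have : lam < |μ i| := (Finset.mem_filter.mp hi).2
    intro h0; rw [h0] at this; simp at this; linarith
  have hterm : ∀ i ∈ S, c i * β i = (c i / μ i) * γ i := by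
    intro i hi
    rw [hγβ i]
    have hne := hμne i hi
    field_simp
  -- column sums of P are 1
  have hPcols : ∀ j, (∑ i, P i j) = 1 := by
    intro j
    calc (∑ i, P i j) = ∑ i, P j i := Finset.sum_congr rfl fun i _ => hPsym' i j
      _ = 1 := hProws j
  -- sum of (Pa) is 1
  have hPa1 : (∑ v, P.mulVec a v) = 1 := by
    calc (∑ v, P.mulVec a v) = ∑ v, ∑ w, P v w * a w := rfl
      _ = ∑ w, ∑ v, P v w * a w := Finset.sum_comm
      _ = ∑ w, a w * ∑ v, P v w := by
          refine Finset.sum_congr rfl fun w _ => ?_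
          rw [Finset.mul_sum]
          exact Finset.sum_congr rfl fun v _ => by ring
      _ = ∑ w, a w := by
          refine Finset.sum_congr rfl fun w _ => ?_
          rw [hPcols w, mul_one]
      _ = 1 := ha
  -- g = Pa - 1/N pointwise
  have hgPa : ∀ v, g v = P.mulVec a v - 1 / N := by
    intro v
    have hone : P.mulVec (fun _ => (1 / N : ℝ)) v = 1 / N := by
      have : (fun _ : Fin N => (1 / N : ℝ)) = (1/N : ℝ) • (fun _ => (1:ℝ)) := by
        funext w; simp
      rw [this, Matrix.mulVec_smul, hPone]
      simp
    have : g v = P.mulVec a v - P.mulVec (fun _ => (1 / N : ℝ)) v := by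
      rw [hgdef, hbdef]
      have : (fun v => a v - 1 / (N:ℝ)) = a - (fun _ => (1 / N : ℝ)) := rfl
      rw [this, Matrix.mulVec_sub]
      rfl
    rw [this, hone]
  -- norm of g squared
  have hgnorm : (∑ v, g v ^ 2) = (∑ v, (P.mulVec a v) ^ 2) - 1 / N := by
    have hNne : (N : ℝ) ≠ 0 := Nat.cast_ne_zero.mpr hN.ne'
    calc (∑ v, g v ^ 2) = ∑ v, ((P.mulVec a v)^2 - 2 * (1/N) * P.mulVec a v + (1/N)^2) := by
          refine Finset.sum_congr rfl fun v _ => ?_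
          rw [hgPa v]; ring
      _ = (∑ v, (P.mulVec a v)^2) - 2 * (1/N) * (∑ v, P.mulVec a v) + N * (1/N)^2 := by
          rw [Finset.sum_add_distrib, Finset.sum_sub_distrib, ← Finset.mul_sum]
          simp [Finset.card_univ]
      _ = (∑ v, (P.mulVec a v) ^ 2) - 1 / N := by
          rw [hPa1]; field_simp; ring
  -- nonnegativity facts
  have hρ0 : 0 ≤ ρ := le_trans (Real.sqrt_nonneg _) hρ
  have hc2 : (∑ i ∈ S, c i ^ 2) ≤ ρ ^ 2 := by
    have h2 : Real.sqrt (∑ i ∈ S, c i ^ 2) ≤ ρ := by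
      rw [← hnorm]; exact hρ
    have h3 : Real.sqrt (∑ i ∈ S, c i ^ 2) ^ 2 = ∑ i ∈ S, c i ^ 2 :=
      Real.sq_sqrt (Finset.sum_nonneg fun i _ => sq_nonneg (c i))
    calc (∑ i ∈ S, c i ^ 2) = Real.sqrt (∑ i ∈ S, c i ^ 2) ^ 2 := h3.symm
      _ ≤ ρ ^ 2 := pow_le_pow_left₀ (Real.sqrt_nonneg _) h2 2
  -- main chain
  rw [hLHS, abs_neg, hinner, Finset.sum_congr rfl hterm]
  have cs := Finset.sum_mul_sq_le_sq_mul_sq S (fun i => c i / μ i) γ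
  have hcμ : (∑ i ∈ S, (c i / μ i) ^ 2) ≤ (∑ i ∈ S, c i ^ 2) / lam ^ 2 := by
    rw [Finset.sum_div]
    refine Finset.sum_le_sum fun i hi => ?_
    have hμi : lam < |μ i| := (Finset.mem_filter.mp hi).2
    have hμpos : 0 < μ i ^ 2 := by
      rw [← sq_abs]; exact pow_pos (hlam0.trans hμi) 2
    rw [div_pow, div_le_div_iff₀ hμpos (pow_pos hlam0 2)]
    have h1 : lam ^ 2 ≤ μ i ^ 2 := by
      rw [← sq_abs (μ i)]
      exact pow_le_pow_left₀ hlam0.le hμi.le 2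
    nlinarith [sq_nonneg (c i)]
  have hγ2 : (∑ i ∈ S, γ i ^ 2) ≤ (∑ v, (P.mulVec a v) ^ 2) - 1 / N := by
    rw [← hgnorm, ← parseval]
    exact Finset.sum_le_sum_of_subset_of_nonneg (Finset.subset_univ S)
      (fun i _ _ => sq_nonneg (γ i))
  have hrhs0 : (0:ℝ) ≤ (∑ v, (P.mulVec a v) ^ 2) - 1 / N := by
    rw [← hgnorm]; exact Finset.sum_nonneg fun v _ => sq_nonneg (g v)
  have key : (∑ i ∈ S, (c i / μ i) * γ i) ^ 2
      ≤ ((ρ / lam) * Real.sqrt ((∑ v, (P.mulVec a v) ^ 2) - 1 / N)) ^ 2 := by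
    calc (∑ i ∈ S, (c i / μ i) * γ i) ^ 2
        ≤ (∑ i ∈ S, (c i / μ i) ^ 2) * ∑ i ∈ S, γ i ^ 2 := cs
      _ ≤ ((∑ i ∈ S, c i ^ 2) / lam ^ 2) * ((∑ v, (P.mulVec a v) ^ 2) - 1 / N) := by
          apply mul_le_mul hcμ hγ2 (Finset.sum_nonneg fun i _ => sq_nonneg (γ i)) (by positivity)
      _ ≤ (ρ ^ 2 / lam ^ 2) * ((∑ v, (P.mulVec a v) ^ 2) - 1 / N) := by
          apply mul_le_mul_of_nonneg_right _ hrhs0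
          exact div_le_div_of_nonneg_right hc2 (sq_nonneg lam)
      _ = ((ρ / lam) * Real.sqrt ((∑ v, (P.mulVec a v) ^ 2) - 1 / N)) ^ 2 := by
          rw [mul_pow, Real.sq_sqrt hrhs0, div_pow]
  have hy0 : 0 ≤ (ρ / lam) * Real.sqrt ((∑ v, (P.mulVec a v) ^ 2) - 1 / N) :=
    mul_nonneg (div_nonneg hρ0 hlam0.le) (Real.sqrt_nonneg _)
  calc |∑ i ∈ S, (c i / μ i) * γ i|
      = Real.sqrt ((∑ i ∈ S, (c i / μ i) * γ i) ^ 2) := (Real.sqrt_sq_eq_abs _).symm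
    _ ≤ Real.sqrt (((ρ / lam) * Real.sqrt ((∑ v, (P.mulVec a v) ^ 2) - 1 / N)) ^ 2) :=
        Real.sqrt_le_sqrt key
    _ = (ρ / lam) * Real.sqrt ((∑ v, (P.mulVec a v) ^ 2) - 1 / N) := Real.sqrt_sq hy0
end
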